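/- Let E be a finite-dimensional real inner product space and K ≥ 1. Let S be a nonempty finite index set of sequences, and for each s ∈ S let T_s ≥ 1 be its number of tokens; for each s ∈ S and each token index t ∈ Fin T_s, let z_{s,t} : E → EuclideanSpace ℝ (Fin K) be differentiable at θ with ‖Dz_{s,t}(θ)‖ ≤ M, and let q_{s,t} be a probability vector on Fin K. Define the mini-batch sequence loss L(ψ) = (1/|S|)·∑_{s∈S} (1/T_s)·∑_{t} CE(q_{s,t}‖softmax(z_{s,t}(ψ))). Let f : E → ℝ be twice continuously differentiable with ‖∇f(ψ)‖ ≤ G and ‖∇²f(ψ)‖ ≤ H for all ψ ∈ E. Then for every η ≥ 0, setting θ' = θ − η·∇L(θ), one has |f(θ') − f(θ)| ≤ √2·η·G·M·√(L(θ)) + η²·H·M²·L(θ). -/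

import Mathlib

/-- `softmax(z)_i = exp(z_i) / ∑_j exp(z_j)`. -/
noncomputable def softmax {K : ℕ} (z : EuclideanSpace ℝ (Fin K)) : Fin K → ℝ :=
  fun i => Real.exp (z i) / ∑ j, Real.exp (z j)

/-- Cross-entropy `CE(q‖p) = −∑_i q_i·log p_i`. -/
noncomputable def crossEntropy {K : ℕ} (q p : Fin K → ℝ) : ℝ :=
  -∑ i, q i * Real.log (p i)

/-!
The gradient of `v ↦ CE(q‖softmax v)` is `softmax v − q`, and for probability vectors
`p > 0` and `q` one has `‖p − q‖² ≤ 2 − 2⟨q, p⟩ ≤ −2 log ⟨q, p⟩ ≤ 2 CE(q‖p)`, the last step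
being Jensen's inequality for `log`. By the chain rule each token loss `ℓ` has gradient of norm
at most `M √(2 ℓ)`, so `‖∇L(θ)‖` is at most `M` times a sub-probability average of the
`√(2 ℓ)`, which by concavity of `√` is at most `√2 M √(L θ)`. Since `f` is `G`-Lipschitz, the
first-order term alone already bounds `|f(θ') − f(θ)|`; the second-order term is nonnegative.
-/

open Finset Real

section ProbabilityVector

variable {ι : Type*} [Fintype ι] {p q : ι → ℝ}

lemma sum_sq_le_one_of_sum_eq_one (hp0 : ∀ i, 0 ≤ p i) (hp1 : ∑ i, p i = 1) :
    ∑ i, p i ^ 2 ≤ 1 := by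
  calc ∑ i, p i ^ 2 ≤ ∑ i, p i := sum_le_sum fun i _ => by
        have : p i ≤ 1 := hp1 ▸ single_le_sum (fun j _ => hp0 j) (mem_univ i)
        nlinarith [hp0 i]
    _ = 1 := hp1

lemma sum_sq_sub_le_two_sub_two_mul_sum_mul (hp0 : ∀ i, 0 ≤ p i) (hp1 : ∑ i, p i = 1)
    (hq0 : ∀ i, 0 ≤ q i) (hq1 : ∑ i, q i = 1) :
    ∑ i, (p i - q i) ^ 2 ≤ 2 - 2 * ∑ i, q i * p i := by
  have expand : ∑ i, (p i - q i) ^ 2 = ∑ i, p i ^ 2 + ∑ i, q i ^ 2 - 2 * ∑ i, q i * p i := by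
    rw [mul_sum, ← sum_add_distrib, ← sum_sub_distrib]
    exact sum_congr rfl fun i _ => by ring
  linarith [sum_sq_le_one_of_sum_eq_one hp0 hp1, sum_sq_le_one_of_sum_eq_one hq0 hq1]

lemma sum_mul_pos_of_sum_eq_one (hp : ∀ i, 0 < p i) (hq0 : ∀ i, 0 ≤ q i)
    (hq1 : ∑ i, q i = 1) : 0 < ∑ i, q i * p i := by
  obtain ⟨i, -, hqi⟩ := exists_lt_of_sum_lt (by simp [hq1] : ∑ _i : ι, (0 : ℝ) < ∑ i, q i)
  exact sum_pos' (fun j _ => mul_nonneg (hq0 j) (hp j).le) ⟨i, mem_univ i, mul_pos hqi (hp i)⟩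

lemma sum_mul_log_le_log_sum_mul (hp : ∀ i, 0 < p i) (hq0 : ∀ i, 0 ≤ q i)
    (hq1 : ∑ i, q i = 1) : ∑ i, q i * log (p i) ≤ log (∑ i, q i * p i) := by
  simpa only [smul_eq_mul] using strictConcaveOn_log_Ioi.concaveOn.le_map_sum
    (fun i _ => hq0 i) hq1 (fun i _ => Set.mem_Ioi.mpr (hp i))

end ProbabilityVector

lemma sum_sq_sub_le_two_mul_crossEntropy {K : ℕ} {p q : Fin K → ℝ} (hp0 : ∀ i, 0 < p i)
    (hp1 : ∑ i, p i = 1) (hq0 : ∀ i, 0 ≤ q i) (hq1 : ∑ i, q i = 1) :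
    ∑ i, (p i - q i) ^ 2 ≤ 2 * crossEntropy q p := by
  have ht := sum_mul_pos_of_sum_eq_one hp0 hq0 hq1
  calc ∑ i, (p i - q i) ^ 2 ≤ 2 - 2 * ∑ i, q i * p i :=
        sum_sq_sub_le_two_sub_two_mul_sum_mul (fun i => (hp0 i).le) hp1 hq0 hq1
    _ ≤ -2 * log (∑ i, q i * p i) := by linarith [log_le_sub_one_of_pos ht]
    _ ≤ 2 * crossEntropy q p := by
        rw [crossEntropy]
        linarith [sum_mul_log_le_log_sum_mul hp0 hq0 hq1]

section Softmax

variable {K : ℕ} [NeZero K] {q : Fin K → ℝ}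

lemma sum_exp_pos (v : EuclideanSpace ℝ (Fin K)) : 0 < ∑ j, exp (v j) :=
  sum_pos (fun _ _ => exp_pos _) univ_nonempty

lemma softmax_pos (v : EuclideanSpace ℝ (Fin K)) (i : Fin K) : 0 < softmax v i :=
  div_pos (exp_pos _) (sum_exp_pos v)

lemma sum_softmax (v : EuclideanSpace ℝ (Fin K)) : ∑ i, softmax v i = 1 := by
  unfold softmax
  rw [← sum_div, div_self (sum_exp_pos v).ne']

lemma crossEntropy_softmax_nonneg (hq0 : ∀ i, 0 ≤ q i) (v : EuclideanSpace ℝ (Fin K)) :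
    0 ≤ crossEntropy q (softmax v) := by
  have hle : ∀ i, softmax v i ≤ 1 := fun i =>
    sum_softmax v ▸ single_le_sum (fun j _ => (softmax_pos v j).le) (mem_univ i)
  rw [crossEntropy, neg_nonneg]
  exact sum_nonpos fun i _ =>
    mul_nonpos_of_nonneg_of_nonpos (hq0 i) (log_nonpos (softmax_pos v i).le (hle i))

lemma crossEntropy_softmax_eq (hq1 : ∑ i, q i = 1) (v : EuclideanSpace ℝ (Fin K)) :
    crossEntropy q (softmax v) = log (∑ j, exp (v j)) - ∑ i, q i * v i := by
  have hlog : ∀ i, log (softmax v i) = v i - log (∑ j, exp (v j)) := fun i => by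
    rw [softmax, log_div (exp_ne_zero _) (sum_exp_pos v).ne', log_exp]
  simp only [crossEntropy, hlog, mul_sub, sum_sub_distrib, ← sum_mul, hq1]
  ring

lemma hasFDerivAt_crossEntropy_softmax (hq1 : ∑ i, q i = 1) (v : EuclideanSpace ℝ (Fin K)) :
    HasFDerivAt (fun w => crossEntropy q (softmax w))
      (innerSL ℝ (WithLp.toLp 2 (softmax v - q))) v := by
  have hproj (j : Fin K) : HasFDerivAt (fun w : EuclideanSpace ℝ (Fin K) => w j)
      (EuclideanSpace.proj (𝕜 := ℝ) j) v := (EuclideanSpace.proj (𝕜 := ℝ) j).hasFDerivAt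
  have hlse := (HasFDerivAt.fun_sum fun j _ => (hproj j).exp).log (sum_exp_pos v).ne'
  have hlin := HasFDerivAt.fun_sum (u := univ) fun i _ => (hproj i).const_mul (q i)
  refine ((hlse.fun_sub hlin).congr_of_eventuallyEq
    (Filter.Eventually.of_forall fun w => crossEntropy_softmax_eq hq1 w)).congr_fderiv ?_
  ext w
  simp only [innerSL_apply_apply, sub_apply, smul_apply, _root_.sum_apply, PiLp.proj_apply,
    smul_eq_mul, PiLp.inner_apply, RCLike.inner_apply, conj_trivial, Pi.sub_apply, softmax]
  rw [mul_sum, ← sum_sub_distrib]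
  refine sum_congr rfl fun i _ => ?_
  field_simp

lemma norm_softmax_sub_le (hq0 : ∀ i, 0 ≤ q i) (hq1 : ∑ i, q i = 1)
    (v : EuclideanSpace ℝ (Fin K)) :
    ‖(WithLp.toLp 2 (softmax v - q) : EuclideanSpace ℝ (Fin K))‖ ≤
      √(2 * crossEntropy q (softmax v)) := by
  rw [EuclideanSpace.norm_eq]
  gcongr
  simpa [Real.norm_eq_abs, sq_abs] using
    sum_sq_sub_le_two_mul_crossEntropy (softmax_pos v) (sum_softmax v) hq0 hq1

variable {E : Type*} [NormedAddCommGroup E] [NormedSpace ℝ E]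
  {z : E → EuclideanSpace ℝ (Fin K)} {θ : E}

lemma hasFDerivAt_crossEntropy_softmax_comp (hq1 : ∑ i, q i = 1)
    (hz : DifferentiableAt ℝ z θ) :
    HasFDerivAt (fun ψ => crossEntropy q (softmax (z ψ)))
      ((innerSL ℝ (WithLp.toLp 2 (softmax (z θ) - q))).comp (fderiv ℝ z θ)) θ :=
  (hasFDerivAt_crossEntropy_softmax hq1 (z θ)).comp θ hz.hasFDerivAt

lemma norm_fderiv_crossEntropy_softmax_comp_le {M : ℝ} (hq0 : ∀ i, 0 ≤ q i)
    (hq1 : ∑ i, q i = 1) (hz : DifferentiableAt ℝ z θ) (hDz : ‖fderiv ℝ z θ‖ ≤ M) :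
    ‖fderiv ℝ (fun ψ => crossEntropy q (softmax (z ψ))) θ‖ ≤
      M * √(2 * crossEntropy q (softmax (z θ))) := by
  rw [(hasFDerivAt_crossEntropy_softmax_comp hq1 hz).fderiv]
  calc _ ≤ ‖innerSL ℝ (WithLp.toLp 2 (softmax (z θ) - q))‖ * ‖fderiv ℝ z θ‖ :=
        ContinuousLinearMap.opNorm_comp_le _ _
    _ ≤ √(2 * crossEntropy q (softmax (z θ))) * M := by
        rw [innerSL_apply_norm]
        exact mul_le_mul (norm_softmax_sub_le hq0 hq1 _) hDz (norm_nonneg _) (sqrt_nonneg _)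
    _ = _ := mul_comm _ _

end Softmax

section Calculus

variable {E : Type*} [NormedAddCommGroup E]

lemma norm_fderiv_sum_mul_le [NormedSpace ℝ E] {ι : Type*} [Fintype ι] {g : ι → E → ℝ} {w b : ι → ℝ} {θ : E}
    (hw : ∀ i, 0 ≤ w i) (hg : ∀ i, DifferentiableAt ℝ (g i) θ)
    (hb : ∀ i, ‖fderiv ℝ (g i) θ‖ ≤ b i) :
    ‖fderiv ℝ (fun ψ => ∑ i, w i * g i ψ) θ‖ ≤ ∑ i, w i * b i := by
  rw [fderiv_fun_sum fun i _ => (hg i).const_mul (w i)]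
  refine (norm_sum_le _ _).trans (sum_le_sum fun i _ => ?_)
  rw [fderiv_const_mul (hg i), norm_smul, Real.norm_eq_abs, abs_of_nonneg (hw i)]
  exact mul_le_mul_of_nonneg_left (hb i) (hw i)

variable [InnerProductSpace ℝ E] [CompleteSpace E]

lemma norm_gradient_eq (f : E → ℝ) (x : E) : ‖gradient f x‖ = ‖fderiv ℝ f x‖ := by
  rw [← toDual_gradient, LinearIsometryEquiv.norm_map]

lemma abs_sub_le_of_norm_gradient_le {f : E → ℝ} {G : ℝ} (hf : Differentiable ℝ f)
    (hG : ∀ x, ‖gradient f x‖ ≤ G) (x y : E) : |f x - f y| ≤ G * ‖x - y‖ := by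
  simpa only [Real.norm_eq_abs] using convex_univ.norm_image_sub_le_of_norm_fderiv_le
    (fun x _ => hf x) (fun x _ => norm_gradient_eq f x ▸ hG x) (Set.mem_univ y) (Set.mem_univ x)

end Calculus

section Averaging

lemma sum_mul_sqrt_le_sqrt_sum_mul {ι : Type*} [Fintype ι] {w ℓ : ι → ℝ} (hw : ∀ i, 0 ≤ w i)
    (hw1 : ∑ i, w i ≤ 1) (hℓ : ∀ i, 0 ≤ ℓ i) : ∑ i, w i * √(ℓ i) ≤ √(∑ i, w i * ℓ i) := by
  have hcs := sum_sqrt_mul_sqrt_le univ hw fun i => mul_nonneg (hw i) (hℓ i)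
  have hterm : ∀ i, √(w i) * √(w i * ℓ i) = w i * √(ℓ i) := fun i => by
    rw [sqrt_mul (hw i), ← mul_assoc, mul_self_sqrt (hw i)]
  simp only [hterm] at hcs
  calc _ ≤ √(∑ i, w i) * √(∑ i, w i * ℓ i) := hcs
    _ ≤ 1 * √(∑ i, w i * ℓ i) := by gcongr; exact sqrt_le_one.mpr hw1
    _ = _ := one_mul _

variable {S : Type*} [Fintype S]

lemma mul_sum_mul_sum_eq_sum_sigma {ι : S → Type*} [∀ s, Fintype (ι s)] (c : ℝ) (a : S → ℝ)
    (g : (s : S) → ι s → ℝ) :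
    c * ∑ s, a s * ∑ t, g s t = ∑ x : Σ s, ι s, c * a x.1 * g x.1 x.2 := by
  rw [Fintype.sum_sigma, mul_sum]
  exact sum_congr rfl fun s _ => by rw [mul_sum, mul_sum]; simp only [mul_assoc]

lemma sum_sigma_one_div_card_mul_one_div_le_one (T : S → ℕ) :
    ∑ x : Σ s, Fin (T s), 1 / (Fintype.card S : ℝ) * (1 / (T x.1 : ℝ)) ≤ 1 := by
  have h := mul_sum_mul_sum_eq_sum_sigma (ι := fun s => Fin (T s))
    (1 / (Fintype.card S : ℝ)) (fun s => 1 / (T s : ℝ)) (fun _ _ => 1)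
  simp only [mul_one] at h
  rw [← h]
  have hs (s : S) : 1 / (T s : ℝ) * ∑ _t : Fin (T s), (1 : ℝ) ≤ 1 := by
    rw [sum_const, card_univ, Fintype.card_fin, nsmul_one, one_div_mul_eq_div]
    exact div_self_le_one _
  calc _ ≤ 1 / (Fintype.card S : ℝ) * ∑ _s : S, (1 : ℝ) := by gcongr with s; exact hs s
    _ ≤ 1 := by
        rw [sum_const, card_univ, nsmul_one, one_div_mul_eq_div]
        exact div_self_le_one _

end Averaging

section WeightedLoss

variable {E : Type*} [NormedAddCommGroup E] [InnerProductSpace ℝ E] [CompleteSpace E]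
  {K : ℕ} [NeZero K] {ι : Type*} [Fintype ι] {w : ι → ℝ} {z : ι → E → EuclideanSpace ℝ (Fin K)}
  {q : ι → Fin K → ℝ} {θ : E} {M : ℝ}

lemma norm_gradient_sum_mul_crossEntropy_softmax_le (hw : ∀ i, 0 ≤ w i) (hw1 : ∑ i, w i ≤ 1)
    (hM : 0 ≤ M) (hz : ∀ i, DifferentiableAt ℝ (z i) θ) (hDz : ∀ i, ‖fderiv ℝ (z i) θ‖ ≤ M)
    (hq0 : ∀ i j, 0 ≤ q i j) (hq1 : ∀ i, ∑ j, q i j = 1) :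
    ‖gradient (fun ψ => ∑ i, w i * crossEntropy (q i) (softmax (z i ψ))) θ‖ ≤
      √2 * M * √(∑ i, w i * crossEntropy (q i) (softmax (z i θ))) := by
  set ℓ := fun i => crossEntropy (q i) (softmax (z i θ))
  rw [norm_gradient_eq]
  calc _ ≤ ∑ i, w i * (M * √(2 * ℓ i)) :=
        norm_fderiv_sum_mul_le hw
          (fun i => (hasFDerivAt_crossEntropy_softmax_comp (hq1 i) (hz i)).differentiableAt)
          (fun i => norm_fderiv_crossEntropy_softmax_comp_le (hq0 i) (hq1 i) (hz i) (hDz i))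
    _ = √2 * M * ∑ i, w i * √(ℓ i) := by
        rw [mul_sum]
        exact sum_congr rfl fun i _ => by rw [sqrt_mul zero_le_two]; ring
    _ ≤ √2 * M * √(∑ i, w i * ℓ i) := by
        gcongr
        exact sum_mul_sqrt_le_sqrt_sum_mul hw hw1 fun i => crossEntropy_softmax_nonneg (hq0 i) _

end WeightedLoss

theorem per_step_forgetting_bound_minibatch_general
    {E : Type*} [NormedAddCommGroup E] [InnerProductSpace ℝ E] [FiniteDimensional ℝ E]
    {K : ℕ} (hK : 1 ≤ K)
    (S : Type*) [Fintype S]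
    (T : S → ℕ)
    (z : (s : S) → Fin (T s) → E → EuclideanSpace ℝ (Fin K)) (θ : E)
    (M : ℝ) (hM : 0 ≤ M)
    (hz : ∀ s t, DifferentiableAt ℝ (z s t) θ)
    (hDz : ∀ s t, ‖fderiv ℝ (z s t) θ‖ ≤ M)
    (q : (s : S) → Fin (T s) → Fin K → ℝ)
    (hq0 : ∀ s t i, 0 ≤ q s t i) (hq1 : ∀ s t, ∑ i, q s t i = 1)
    (L : E → ℝ)
    (hL : L = fun ψ => (1 / (Fintype.card S : ℝ)) *
      ∑ s, (1 / (T s : ℝ)) * ∑ t, crossEntropy (q s t) (softmax (z s t ψ)))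
    (f : E → ℝ) (G H : ℝ) (hG : 0 ≤ G) (hH : 0 ≤ H)
    (hf : ContDiff ℝ 2 f)
    (hfgrad : ∀ ψ : E, ‖gradient f ψ‖ ≤ G)
    (η : ℝ) (hη : 0 ≤ η) :
    |f (θ - η • gradient L θ) - f θ| ≤
      Real.sqrt 2 * η * G * M * Real.sqrt (L θ) + η ^ 2 * H * M ^ 2 * L θ := by
  have : NeZero K := ⟨by omega⟩
  set w : (Σ s, Fin (T s)) → ℝ := fun x => 1 / (Fintype.card S : ℝ) * (1 / (T x.1 : ℝ))
  have hw (x) : 0 ≤ w x := by positivity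
  have hLw : L = fun ψ => ∑ x, w x * crossEntropy (q x.1 x.2) (softmax (z x.1 x.2 ψ)) := by
    rw [hL]
    exact funext fun ψ => mul_sum_mul_sum_eq_sum_sigma _ _ _
  have hLθ : 0 ≤ L θ := hLw ▸ sum_nonneg fun x _ =>
    mul_nonneg (hw x) (crossEntropy_softmax_nonneg (hq0 x.1 x.2) _)
  have hgrad : ‖gradient L θ‖ ≤ √2 * M * √(L θ) := by
    rw [hLw]
    exact norm_gradient_sum_mul_crossEntropy_softmax_le hw
      (sum_sigma_one_div_card_mul_one_div_le_one T) hM (fun x => hz x.1 x.2)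
      (fun x => hDz x.1 x.2) (fun x => hq0 x.1 x.2) (fun x => hq1 x.1 x.2)
  calc |f (θ - η • gradient L θ) - f θ| ≤ G * ‖η • gradient L θ‖ := by
        simpa using abs_sub_le_of_norm_gradient_le (hf.differentiable two_ne_zero) hfgrad
          (θ - η • gradient L θ) θ
    _ = G * η * ‖gradient L θ‖ := by rw [norm_smul, Real.norm_eq_abs, abs_of_nonneg hη, mul_assoc]
    _ ≤ G * η * (√2 * M * √(L θ)) := by gcongr
    _ ≤ √2 * η * G * M * √(L θ) + η ^ 2 * H * M ^ 2 * L θ := by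
        have : 0 ≤ η ^ 2 * H * M ^ 2 * L θ := by positivity
        linarith

/-- **Per-step forgetting bound (Theorem 1, full mini-batch sequence-level form).**
Each training sequence `s` contributes its token-averaged softmax cross-entropy, and
the mini-batch loss `L` is the average over sequences. If every token's logit Jacobian
at `θ` has operator norm at most `M`, and `f` is `C²` with gradient bounded by `G` and
Hessian operator norm bounded by `H`, then the SGD step `θ' = θ − η·∇L(θ)` satisfies
`|f(θ') − f(θ)| ≤ √2·η·G·M·√(L(θ)) + η²·H·M²·L(θ)`. -/
theorem per_step_forgetting_bound_minibatch
    {E : Type*} [NormedAddCommGroup E] [InnerProductSpace ℝ E] [FiniteDimensional ℝ E]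
    {K : ℕ} (hK : 1 ≤ K)
    (S : Type*) [Fintype S] [Nonempty S]
    (T : S → ℕ) (hT : ∀ s, 1 ≤ T s)
    (z : (s : S) → Fin (T s) → E → EuclideanSpace ℝ (Fin K)) (θ : E)
    (M : ℝ) (hM : 0 ≤ M)
    (hz : ∀ s t, DifferentiableAt ℝ (z s t) θ)
    (hDz : ∀ s t, ‖fderiv ℝ (z s t) θ‖ ≤ M)
    (q : (s : S) → Fin (T s) → Fin K → ℝ)
    (hq0 : ∀ s t i, 0 ≤ q s t i) (hq1 : ∀ s t, ∑ i, q s t i = 1)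
    (L : E → ℝ)
    (hL : L = fun ψ => (1 / (Fintype.card S : ℝ)) *
      ∑ s, (1 / (T s : ℝ)) * ∑ t, crossEntropy (q s t) (softmax (z s t ψ)))
    (f : E → ℝ) (G H : ℝ) (hG : 0 ≤ G) (hH : 0 ≤ H)
    (hf : ContDiff ℝ 2 f)
    (hfgrad : ∀ ψ : E, ‖gradient f ψ‖ ≤ G)
    (hfhess : ∀ ψ : E, ‖fderiv ℝ (fderiv ℝ f) ψ‖ ≤ H)
    (η : ℝ) (hη : 0 ≤ η) :
    |f (θ - η • gradient L θ) - f θ| ≤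
      Real.sqrt 2 * η * G * M * Real.sqrt (L θ) + η ^ 2 * H * M ^ 2 * L θ :=
  per_step_forgetting_bound_minibatch_general hK S T z θ M hM hz hDz q hq0 hq1 L hL f G H hG hH hf
    hfgrad η hη
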